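/- arXiv:2207.13497 — 7 statements merged into one kernel-verified Lean document; each statement's English description precedes it below -/
import Mathlib

section
/- Let p be a prime, m a positive integer, k an integer with 1 ≤ k ≤ m−1, q = p^k and q̄ = p^{m−k}. Let α, b ∈ F be nonzero and a ∈ F. Then the Taniguchi multiplication T(q, α, a, b) on F × F is isotopic to the Taniguchi multiplication T(q̄, α^{−q²}, a·α^{q−1}·b^{−1}, α^{q²−1}·b^{−1}). -/
open scoped Classical
noncomputable section

abbrev GF (p m : ℕ) [Fact p.Prime] := GaloisField p m

/-- The Taniguchi multiplication `T(q,α,a,b)` on `F × F` where `F = F_{p^m}`. -/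
def taniMul (p m : ℕ) [Fact p.Prime] (q : ℕ) (α a b : GF p m) :
    GF p m × GF p m → GF p m × GF p m → GF p m × GF p m :=
  fun w z =>
    (w.1 ^ q * z.1 + α ^ q ^ 2 * w.1 * z.1 ^ q
       - a * (w.1 * z.2 ^ q - α ^ q * z.1 * w.2 ^ q)
       - b * (w.2 ^ q * z.2 + α * w.2 * z.2 ^ q),
     w.1 * z.2 ^ q ^ 2 + w.2 ^ q ^ 2 * z.1)

/-- Two multiplications on `F × F` are isotopic if there are `F_p`-linear bijections
`N, L, M` with `N (w ∘₁ z) = L w ∘₂ M z` for all `w, z`. -/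
def Isotopic (p m : ℕ) [Fact p.Prime]
    (mul1 mul2 : GF p m × GF p m → GF p m × GF p m → GF p m × GF p m) : Prop :=
  ∃ N L M : (GF p m × GF p m) ≃ₗ[ZMod p] GF p m × GF p m,
    ∀ w z, N (mul1 w z) = mul2 (L w) (M z)

/-! Write `q = p ^ k` and `q̄ = p ^ (m - k)`, so that `t ↦ t ^ q̄` inverts the `F_p`-linear
Frobenius power `t ↦ t ^ q` on `F`. The isotopy is `L = M : (x, y) ↦ (y ^ q, x ^ q)` and
`N : (s, t) ↦ (-(α b)⁻¹ s, t ^ q̄)`: after substituting, every `(t ^ q) ^ q̄` collapses to `t`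
and both components of `L w ∘₂ M z` become those of `N (w ∘₁ z)` by field arithmetic. -/

section FrobeniusLinearEquiv

variable (p : ℕ) [Fact p.Prime] (L : Type*) [Field L] [Algebra (ZMod p) L]
  [Algebra.IsAlgebraic (ZMod p) L]

def frobeniusPowLinearEquiv (k : ℕ) : L ≃ₗ[ZMod p] L :=
  ((FiniteField.frobeniusAlgEquivOfAlgebraic (ZMod p) L) ^ k).toLinearEquiv

theorem frobeniusPowLinearEquiv_apply (k : ℕ) (t : L) :
    frobeniusPowLinearEquiv p L k t = t ^ p ^ k := by
  have := congrFun (FiniteField.coe_frobeniusAlgEquivOfAlgebraic_iterate (ZMod p) L k) t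
  simpa [frobeniusPowLinearEquiv, ZMod.card, AlgEquiv.coe_pow] using this

end FrobeniusLinearEquiv

theorem GaloisField.pow_card_pow_self (p : ℕ) [Fact p.Prime] (m : ℕ) (t : GaloisField p m) :
    t ^ p ^ m = t := by
  rcases eq_or_ne m 0 with rfl | hm
  · simp
  · have := Fintype.ofFinite (GaloisField p m)
    rw [← GaloisField.card p m hm, Nat.card_eq_fintype_card, FiniteField.pow_card]

section
variable {p m k : ℕ} [Fact p.Prime]

theorem GaloisField.pow_pow_sub_pow_cancel (hk : k ≤ m) (t : GaloisField p m) :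
    (t ^ p ^ k) ^ p ^ (m - k) = t := by
  rw [← pow_mul, ← pow_add, Nat.add_sub_cancel' hk, GaloisField.pow_card_pow_self]

theorem taniMul_swap_frobenius (hk : k ≤ m) {α b : GF p m} (hα : α ≠ 0) (hb : b ≠ 0)
    (a x y u v : GF p m) :
    taniMul p m (p ^ (m - k)) (α⁻¹ ^ (p ^ k) ^ 2) (a * α ^ (p ^ k - 1) * b⁻¹)
        (α ^ ((p ^ k) ^ 2 - 1) * b⁻¹) (y ^ p ^ k, x ^ p ^ k) (v ^ p ^ k, u ^ p ^ k) =
      (-(α * b)⁻¹ * (taniMul p m (p ^ k) α a b (x, y) (u, v)).1,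
        (taniMul p m (p ^ k) α a b (x, y) (u, v)).2 ^ p ^ (m - k)) := by
  have cancel := GaloisField.pow_pow_sub_pow_cancel (p := p) hk
  have cancel_sq (t : GF p m) : (t ^ p ^ k) ^ (p ^ (m - k)) ^ 2 = t ^ p ^ (m - k) := by
    rw [sq, pow_mul, cancel]
  have sq_cancel (t : GF p m) : (t ^ (p ^ k) ^ 2) ^ p ^ (m - k) = t ^ p ^ k := by
    rw [sq, pow_mul, cancel]
  have hq : 1 ≤ p ^ k := Nat.one_le_pow _ _ (Fact.out : p.Prime).pos
  simp only [taniMul, Prod.mk.injEq]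
  constructor
  · have double_cancel : (α⁻¹ ^ (p ^ k) ^ 2) ^ (p ^ (m - k)) ^ 2 = α⁻¹ := by
      rw [sq (p ^ k), pow_mul, cancel_sq, cancel]
    rw [pow_sub₀ α hα hq, pow_sub₀ α hα (Nat.one_le_pow _ _ hq), pow_one]
    simp only [cancel, sq_cancel, double_cancel]
    simp only [inv_pow]
    field_simp
    ring
  · rw [add_pow_char_pow, mul_pow, mul_pow, cancel_sq, cancel_sq, sq_cancel, sq_cancel]
    ring
end

theorem taniguchi_isotopic_qbar_general (p m k : ℕ) [Fact p.Prime]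
    (hk2 : k ≤ m - 1) (α a b : GF p m) (hα : α ≠ 0) (hb : b ≠ 0) :
    Isotopic p m (taniMul p m (p ^ k) α a b)
      (taniMul p m (p ^ (m - k)) (α⁻¹ ^ (p ^ k) ^ 2)
        (a * α ^ (p ^ k - 1) * b⁻¹) (α ^ ((p ^ k) ^ 2 - 1) * b⁻¹)) := by
  have hk : k ≤ m := hk2.trans (Nat.sub_le m 1)
  have hc : -(α * b)⁻¹ ≠ 0 := neg_ne_zero.2 (inv_ne_zero (mul_ne_zero hα hb))
  let frobeniusSwap : (GF p m × GF p m) ≃ₗ[ZMod p] GF p m × GF p m :=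
    (LinearEquiv.prodComm (ZMod p) _ _).trans
      ((frobeniusPowLinearEquiv p _ k).prodCongr (frobeniusPowLinearEquiv p _ k))
  refine ⟨(DistribMulAction.toLinearEquiv (ZMod p) _ (Units.mk0 _ hc)).prodCongr
      (frobeniusPowLinearEquiv p _ (m - k)), frobeniusSwap, frobeniusSwap, ?_⟩
  rintro ⟨x, y⟩ ⟨u, v⟩
  simp only [frobeniusSwap, LinearEquiv.trans_apply, LinearEquiv.prodCongr_apply,
    LinearEquiv.prodComm_apply, Prod.swap_prod_mk, frobeniusPowLinearEquiv_apply,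
    DistribMulAction.toLinearEquiv_apply, Units.smul_mk0, smul_eq_mul]
  exact (taniMul_swap_frobenius hk hα hb a x y u v).symm

/-- Proposition 1 (G̈oloğlu–Kölsch): `T(q,α,a,b)` is isotopic to
`T(q̄, α^{-q²}, a α^{q-1} b⁻¹, α^{q²-1} b⁻¹)` where `q̄ = p^{m-k}`. -/
theorem taniguchi_isotopic_qbar (p m k : ℕ) [Fact p.Prime] (hm : 0 < m)
    (hk1 : 1 ≤ k) (hk2 : k ≤ m - 1) (α a b : GF p m) (hα : α ≠ 0) (hb : b ≠ 0) :
    Isotopic p m (taniMul p m (p ^ k) α a b)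
      (taniMul p m (p ^ (m - k)) (α⁻¹ ^ (p ^ k) ^ 2)
        (a * α ^ (p ^ k - 1) * b⁻¹) (α ^ ((p ^ k) ^ 2 - 1) * b⁻¹)) :=
  taniguchi_isotopic_qbar_general p m k hk2 α a b hα hb
end
end

section
/- Let p be a prime, m a positive integer, k an integer with 1 ≤ k ≤ m−1 and q = p^k. Let α, b ∈ F and let a ∈ F be nonzero. Then the Taniguchi multiplication T(q, α, a, b) on F × F is isotopic to the Taniguchi multiplication T(q, α, 1, b·a^{−(1+p^{m−k})}). -/
open scoped Classical
noncomputable section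

/-!
Since `x ↦ x ^ p ^ (m - k)` inverts the Frobenius power `x ↦ x ^ q` on `F`, the element `a` has
the `q`-th root `c = a ^ p ^ (m - k)`. Scaling the second coordinate of both factors by `c`, and
that of the product by `a ^ q = c ^ q ^ 2`, turns `T(q,α,a,b)` into `T(q,α,1,b/(ac))`, and
`ac = a ^ (1 + p ^ (m - k))`.
-/

theorem GaloisField.pow_card_pow_eq_self {p m : ℕ} [Fact p.Prime] (hm : m ≠ 0)
    (a : GaloisField p m) : a ^ p ^ m = a := by
  have : Fintype (GaloisField p m) := Fintype.ofFinite _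
  rw [← GaloisField.card p m hm, Nat.card_eq_fintype_card, FiniteField.pow_card]

theorem GaloisField.pow_pow_sub_pow_eq_self {p m k : ℕ} [Fact p.Prime] (hm : m ≠ 0) (hk : k ≤ m)
    (a : GaloisField p m) : (a ^ p ^ (m - k)) ^ p ^ k = a := by
  rw [← pow_mul, ← pow_add, Nat.sub_add_cancel hk, GaloisField.pow_card_pow_eq_self hm]

def scaleSnd (R : Type*) {K : Type*} [CommSemiring R] [Field K] [Module R K]
    [IsScalarTower R K K] (d : K) (hd : d ≠ 0) : (K × K) ≃ₗ[R] K × K :=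
  (LinearEquiv.refl R K).prodCongr ((LinearEquiv.smulOfNeZero K K d hd).restrictScalars R)

@[simp]
theorem scaleSnd_apply (R : Type*) {K : Type*} [CommSemiring R] [Field K] [Module R K]
    [IsScalarTower R K K] (d : K) (hd : d ≠ 0) (w : K × K) :
    scaleSnd R d hd w = (w.1, d * w.2) :=
  rfl

theorem taniMul_scale_snd {p m : ℕ} [Fact p.Prime] (q : ℕ) (α a b c : GF p m) (ha : a ≠ 0)
    (hc : c ≠ 0) (hca : c ^ q = a) (w z : GF p m × GF p m) :
    ((taniMul p m q α a b w z).1, a ^ q * (taniMul p m q α a b w z).2) =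
      taniMul p m q α 1 (b * (a * c)⁻¹) (w.1, c * w.2) (z.1, c * z.2) := by
  obtain ⟨x, y⟩ := w
  obtain ⟨u, v⟩ := z
  have hpow : ∀ t : GF p m, (c * t) ^ q = a * t ^ q := fun t => by rw [mul_pow, hca]
  have hpow_sq : ∀ t : GF p m, (c * t) ^ q ^ 2 = a ^ q * t ^ q ^ 2 := fun t => by
    rw [mul_pow, sq, pow_mul, hca]
  simp only [taniMul, hpow, hpow_sq, Prod.mk.injEq]
  constructor
  · field_simp
  · ring

theorem taniguchi_isotopic_a_one_general (p m k : ℕ) [Fact p.Prime] (hm : 0 < m)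
    (hk2 : k ≤ m - 1) (α a b : GF p m) (ha : a ≠ 0) :
    Isotopic p m (taniMul p m (p ^ k) α a b)
      (taniMul p m (p ^ k) α 1 (b * (a ^ (1 + p ^ (m - k)))⁻¹)) := by
  set c := a ^ p ^ (m - k)
  have hc : c ≠ 0 := pow_ne_zero _ ha
  have hca : c ^ p ^ k = a := GaloisField.pow_pow_sub_pow_eq_self hm.ne' (by omega) a
  have hb : a ^ (1 + p ^ (m - k)) = a * c := by rw [pow_add, pow_one]
  refine ⟨scaleSnd _ (a ^ p ^ k) (pow_ne_zero _ ha), scaleSnd _ c hc, scaleSnd _ c hc,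
    fun w z => ?_⟩
  simpa only [scaleSnd_apply, hb] using taniMul_scale_snd (p ^ k) α a b c ha hc hca w z

/-- With `a ≠ 0`, `T(q,α,a,b)` is isotopic to `T(q,α,1, b·a^{-(1+p^{m-k})})`. -/
theorem taniguchi_isotopic_a_one (p m k : ℕ) [Fact p.Prime] (hm : 0 < m)
    (hk1 : 1 ≤ k) (hk2 : k ≤ m - 1) (α a b : GF p m) (ha : a ≠ 0) :
    Isotopic p m (taniMul p m (p ^ k) α a b)
      (taniMul p m (p ^ k) α 1 (b * (a ^ (1 + p ^ (m - k)))⁻¹)) :=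
  taniguchi_isotopic_a_one_general p m k hm hk2 α a b ha
end
end

section
/- Let p be a prime, m a positive integer, k an integer with 1 ≤ k ≤ m−1, q = p^k, and α, a, b ∈ F. The original Taniguchi multiplication on F × F, (x,y) ∗ (u,v) = ((x^q·u + α·x·u^q)^{q²} − a·(x^q·v − α·u^q·y)^q − b·(y^q·v + α·y·v^q), x·v + y·u), is isotopic to the Taniguchi multiplication T(q,α,a,b), i.e., to (x,y) ∘ (u,v) = (x^q·u + α^{q²}·x·u^q − a·(x·v^q − α^q·u·y^q) − b·(y^q·v + α·y·v^q), x·v^{q²} + y^{q²}·u). -/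
open scoped Classical
noncomputable section

/-- The original Taniguchi multiplication from Taniguchi's paper. -/
def taniMulOrig (p m : ℕ) [Fact p.Prime] (q : ℕ) (α a b : GF p m) :
    GF p m × GF p m → GF p m × GF p m → GF p m × GF p m :=
  fun w z =>
    ((w.1 ^ q * z.1 + α * w.1 * z.1 ^ q) ^ q ^ 2
       - a * (w.1 ^ q * z.2 - α * z.1 ^ q * w.2) ^ q
       - b * (w.2 ^ q * z.2 + α * w.2 * z.2 ^ q),
     w.1 * z.2 + w.2 * z.1)

/-!
With `q = p ^ k` and `φ x = x ^ q²`, the `(2k)`-th iterate of Frobenius, take `N = id × φ` and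
`L = M = φ × id`. Since `φ` is additive, `φ (x ^ q * u + α * x * u ^ q)` is the leading part of
`T(q,α,a,b)` at `(φ x, y), (φ u, v)`, and `φ (x * v + y * u)` is its second coordinate; the
`a`- and `b`-terms already agree.
-/

def iterateFrobeniusLinearEquiv (R : Type*) [CommRing R] (p n : ℕ) [ExpChar R p]
    [PerfectRing R p] [Module (ZMod p) R] : R ≃ₗ[ZMod p] R :=
  (iterateFrobeniusEquiv R p n).toAddEquiv.toLinearEquiv (ZMod.map_smul _)

@[simp]
lemma iterateFrobeniusLinearEquiv_apply (R : Type*) [CommRing R] (p n : ℕ) [ExpChar R p]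
    [PerfectRing R p] [Module (ZMod p) R] (x : R) :
    iterateFrobeniusLinearEquiv R p n x = x ^ p ^ n :=
  iterateFrobenius_def p n x

lemma taniMulOrig_frobenius {p m : ℕ} [Fact p.Prime] (k : ℕ) (α a b : GF p m)
    (w z : GF p m × GF p m) :
    ((taniMulOrig p m (p ^ k) α a b w z).1, (taniMulOrig p m (p ^ k) α a b w z).2 ^ (p ^ k) ^ 2) =
      taniMul p m (p ^ k) α a b (w.1 ^ (p ^ k) ^ 2, w.2) (z.1 ^ (p ^ k) ^ 2, z.2) := by
  have hq : (p ^ k) ^ 2 = p ^ (2 * k) := by rw [← pow_mul, mul_comm]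
  simp only [taniMul, taniMulOrig, Prod.mk.injEq]
  constructor
  · simp only [hq, add_pow_char_pow, sub_pow_char_pow, mul_pow, ← pow_mul, ← pow_add]
    ring
  · simp only [hq, add_pow_char_pow, mul_pow]

theorem taniguchi_orig_isotopic_general (p m k : ℕ) [Fact p.Prime] (α a b : GF p m) :
    Isotopic p m (taniMulOrig p m (p ^ k) α a b) (taniMul p m (p ^ k) α a b) := by
  have hq : p ^ (2 * k) = (p ^ k) ^ 2 := by rw [← pow_mul, mul_comm]
  let frob := iterateFrobeniusLinearEquiv (GF p m) p (2 * k)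
  let id' := LinearEquiv.refl (ZMod p) (GF p m)
  refine ⟨id'.prodCongr frob, frob.prodCongr id', frob.prodCongr id', fun w z => ?_⟩
  simpa [frob, id', hq] using taniMulOrig_frobenius k α a b w z

/-- The original Taniguchi multiplication is isotopic to the representation `taniMul`. -/
theorem taniguchi_orig_isotopic (p m k : ℕ) [Fact p.Prime] (hm : 0 < m)
    (hk1 : 1 ≤ k) (hk2 : k ≤ m - 1) (α a b : GF p m) :
    Isotopic p m (taniMulOrig p m (p ^ k) α a b) (taniMul p m (p ^ k) α a b) :=
  taniguchi_orig_isotopic_general p m k α a b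
end
end

section
/- Let p be a prime, m a positive integer, k an integer with 1 ≤ k ≤ m−1, q = p^k, and α, a, b ∈ F. For every nonzero r ∈ F and all x, y, u, v ∈ F, writing (s₁, s₂) = (x,y) ∘ (u,v) for the Taniguchi multiplication T(q,α,a,b), one has (r^{q+1}·s₁, r^{q²+1}·s₂) = (r·x, r·y) ∘ (r·u, r·v). Consequently, for every nonzero r ∈ F the triple γ_r = (N_r, L_r, M_r), where N_r(x,y) = (r^{q+1}·x, r^{q²+1}·y) and L_r(x,y) = M_r(x,y) = (r·x, r·y), is an autotopism of T(q,α,a,b). -/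
open scoped Classical
noncomputable section

def prodScale {R K : Type*} [CommSemiring R] [Semiring K] [Algebra R K] (c d : Kˣ) :
    (K × K) ≃ₗ[R] K × K :=
  (DistribMulAction.toLinearEquiv R K c).prodCongr (DistribMulAction.toLinearEquiv R K d)

theorem prodScale_apply {R K : Type*} [CommSemiring R] [Semiring K] [Algebra R K] (c d : Kˣ)
    (w : K × K) : prodScale (R := R) c d w = (c * w.1, d * w.2) :=
  rfl

-- Every term of the first coordinate has degree `q` in one argument and `1` in the other,
-- every term of the second has degrees `q²` and `1`.
theorem taniMul_mul_mul {p m : ℕ} [Fact p.Prime] (q : ℕ) (α a b r x y u v : GF p m) :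
    taniMul p m q α a b (r * x, r * y) (r * u, r * v) =
      (r ^ (q + 1) * (taniMul p m q α a b (x, y) (u, v)).1,
       r ^ (q ^ 2 + 1) * (taniMul p m q α a b (x, y) (u, v)).2) := by
  simp only [taniMul, Prod.mk.injEq]
  constructor <;> ring

theorem gamma_r_autotopism_general (p m k : ℕ) [Fact p.Prime]
    (α a b : GF p m) (r : GF p m) (hr : r ≠ 0) :
    (∀ x y u v : GF p m,
      (r ^ (p ^ k + 1) * (taniMul p m (p ^ k) α a b (x, y) (u, v)).1,
       r ^ ((p ^ k) ^ 2 + 1) * (taniMul p m (p ^ k) α a b (x, y) (u, v)).2)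
        = taniMul p m (p ^ k) α a b (r * x, r * y) (r * u, r * v)) ∧
    ∃ N L M : (GF p m × GF p m) ≃ₗ[ZMod p] GF p m × GF p m,
      (∀ x y : GF p m, N (x, y) = (r ^ (p ^ k + 1) * x, r ^ ((p ^ k) ^ 2 + 1) * y)) ∧
      (∀ x y : GF p m, L (x, y) = (r * x, r * y)) ∧ M = L ∧
      ∀ w z, N (taniMul p m (p ^ k) α a b w z)
        = taniMul p m (p ^ k) α a b (L w) (M z) := by
  have hscale x y u v := (taniMul_mul_mul (p ^ k) α a b r x y u v).symm
  let N := prodScale (R := ZMod p) (Units.mk0 r hr ^ (p ^ k + 1))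
    (Units.mk0 r hr ^ ((p ^ k) ^ 2 + 1))
  have hN (w : GF p m × GF p m) : N w = (r ^ (p ^ k + 1) * w.1, r ^ ((p ^ k) ^ 2 + 1) * w.2) := by
    simp [N, prodScale_apply]
  refine ⟨hscale, N, prodScale (Units.mk0 r hr) (Units.mk0 r hr), _,
    fun x y => hN (x, y), fun x y => rfl, rfl, fun w z => ?_⟩
  exact (hN _).trans (hscale w.1 w.2 z.1 z.2)

/-- Lemma 3: for every nonzero `r`, scaling identity for the Taniguchi multiplication,
and consequently `γ_r = (N_r, L_r, M_r)` is an autotopism of `T(q,α,a,b)`. -/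
theorem gamma_r_autotopism (p m k : ℕ) [Fact p.Prime] (hm : 0 < m)
    (hk1 : 1 ≤ k) (hk2 : k ≤ m - 1) (α a b : GF p m) (r : GF p m) (hr : r ≠ 0) :
    (∀ x y u v : GF p m,
      (r ^ (p ^ k + 1) * (taniMul p m (p ^ k) α a b (x, y) (u, v)).1,
       r ^ ((p ^ k) ^ 2 + 1) * (taniMul p m (p ^ k) α a b (x, y) (u, v)).2)
        = taniMul p m (p ^ k) α a b (r * x, r * y) (r * u, r * v)) ∧
    ∃ N L M : (GF p m × GF p m) ≃ₗ[ZMod p] GF p m × GF p m,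
      (∀ x y : GF p m, N (x, y) = (r ^ (p ^ k + 1) * x, r ^ ((p ^ k) ^ 2 + 1) * y)) ∧
      (∀ x y : GF p m, L (x, y) = (r * x, r * y)) ∧ M = L ∧
      ∀ w z, N (taniMul p m (p ^ k) α a b w z)
        = taniMul p m (p ^ k) α a b (L w) (M z) :=
  gamma_r_autotopism_general p m k α a b r hr
end
end

section
/- Let p be a prime, m a positive integer, and p' a p-primitive divisor of p^m − 1. Let G = GL_{F_p}(F × F) be the group of F_p-linear bijections of F × F, and let S = {(x,y) ↦ (r·x, r·y) : r ∈ F^*} and S_R = {(x,y) ↦ (r·x, r·y) : r ∈ R} be subgroups of G. Then the normalizer of S_R in G equals the normalizer of S in G, and both equal the set of bijective maps of the form (x,y) ↦ (c₁·τ(x) + c₂·τ(y), c₃·τ(x) + c₄·τ(y)) where c₁, c₂, c₃, c₄ ∈ F and τ ranges over the Galois group Gal(F/F_p), i.e., τ(x) = x^{p^j} for some 0 ≤ j ≤ m−1. -/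
open scoped Classical
noncomputable section

/-- `p'` is a `p`-primitive divisor of `p^m - 1`. -/
def IsPrimitiveDivisor (p m p' : ℕ) : Prop :=
  p'.Prime ∧ p' ∣ p ^ m - 1 ∧ ∀ j : ℕ, 1 ≤ j → j < m → ¬ p' ∣ p ^ j - 1

/-!
If `e` normalizes `S_R`, conjugating the multiplication by an element `r` of order `p'` gives
the multiplication by some `t`, so the scalars `a` for which `e ∘ (a • ·) ∘ e⁻¹` is again a
scalar multiplication form an `F_p`-subalgebra of `F` containing `r`. As `p'` is a primitive
divisor, `r` lies in no proper subfield, so this subalgebra is all of `F` and `e` is semilinear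
with respect to an automorphism of `F`, that is, a power of the Frobenius. Maps that are
semilinear for `x ↦ x ^ p ^ j` are exactly the maps of the stated shape, and they normalize `S`.
Finally conjugation preserves orders, so the normalizer of `S` also normalizes `S_R`.
-/

open Module

theorem Subgroup.normalizer_le_normalizer_setOf_orderOf {G : Type*} [Group G] (H : Set G)
    (P : ℕ → Prop) : normalizer H ≤ normalizer {g | g ∈ H ∧ P (orderOf g)} := by
  intro g hg x
  change x ∈ H ∧ _ ↔ g * x * g⁻¹ ∈ H ∧ _
  rw [(SemiconjBy.conj_mk g x).orderOf_eq]
  exact and_congr_left' (hg x)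

theorem Subalgebra.eq_top_of_mem_of_pow_card_pow_ne {k K : Type*} [Field k] [Fintype k]
    [Field K] [Finite K] [Algebra k K] (A : Subalgebra k K) {x : K} (hxA : x ∈ A)
    (hx : ∀ j, 0 < j → j < finrank k K → x ^ Fintype.card k ^ j ≠ x) : A = ⊤ := by
  let F := A.toIntermediateField fun y hy ↦
    A.inv_mem_of_algebraic (x := ⟨y, hy⟩) (Algebra.IsAlgebraic.isAlgebraic y)
  have : Fintype F := Fintype.ofFinite F
  have hxF : x ^ Fintype.card k ^ finrank k F = x := by
    simpa [← Module.card_eq_pow_finrank] using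
      congrArg Subtype.val (FiniteField.pow_card (⟨x, hxA⟩ : F))
  have hle : finrank k F ≤ finrank k K := F.toSubalgebra.toSubmodule.finrank_le
  have hF : F = ⊤ := by
    refine IntermediateField.eq_of_le_of_finrank_eq le_top ?_
    rw [IntermediateField.finrank_top']
    by_contra hne
    exact hx _ finrank_pos (lt_of_le_of_ne hle hne) hxF
  simpa [F] using congrArg IntermediateField.toSubalgebra hF

theorem FiniteField.exists_algHom_apply_eq_pow {k K : Type*} [Field k] [Fintype k] [Field K]
    [Finite K] [Algebra k K] (σ : K →ₐ[k] K) :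
    ∃ j < finrank k K, ∀ a, σ a = a ^ Fintype.card k ^ j := by
  obtain ⟨j, rfl⟩ := (bijective_frobeniusAlgHom_pow k K).2 σ
  exact ⟨j, j.2, fun a ↦ by simp [AlgHom.coe_pow, coe_frobeniusAlgHom, pow_iterate]⟩

theorem pow_pow_ne_self_of_orderOf_eq {K : Type*} [Field K] {p m p' : ℕ}
    (hp' : IsPrimitiveDivisor p m p') {x : K} (hx : orderOf x = p') {j : ℕ} (hj : 0 < j)
    (hjm : j < m) : x ^ p ^ j ≠ x := by
  intro h
  have hx0 : x ≠ 0 := by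
    rintro rfl
    rw [orderOf_zero] at hx
    exact hp'.1.ne_zero hx.symm
  obtain hpj | hpj := Nat.eq_zero_or_pos (p ^ j)
  · rw [hpj, pow_zero] at h
    rw [← h, orderOf_one] at hx
    exact hp'.1.ne_one hx.symm
  refine hp'.2.2 j hj hjm (hx ▸ orderOf_dvd_of_pow_eq_one ?_)
  rw [pow_sub₀ x hx0 hpj, h, pow_one, mul_inv_cancel₀ hx0]

section Semilinear

variable {k K V : Type*} [Field k] [Field K] [AddCommGroup V] [Module K V] [Module k V]

variable (k K V) in
def scalarMaps : Set (V ≃ₗ[k] V) := {e | ∃ r : K, r ≠ 0 ∧ ∀ v, e v = r • v}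

variable (k K V) in
def sylowScalarMaps (p' : ℕ) : Set (V ≃ₗ[k] V) :=
  {e | ∃ r : K, r ≠ 0 ∧ (∃ j : ℕ, orderOf r = p' ^ j) ∧ ∀ v, e v = r • v}

theorem orderOf_eq_of_forall_apply_eq_smul [Nontrivial V] {e : V ≃ₗ[k] V} {r : K}
    (he : ∀ v, e v = r • v) : orderOf e = orderOf r := by
  have hpow (n : ℕ) (v : V) : (e ^ n) v = r ^ n • v := by
    induction n with
    | zero => simp
    | succ n ih => rw [pow_succ', LinearEquiv.mul_apply, ih, he, smul_smul, ← pow_succ']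
  obtain ⟨v, hv⟩ := exists_ne (0 : V)
  rw [orderOf_eq_orderOf_iff]
  intro n
  refine ⟨fun h ↦ smul_left_injective K hv ?_, fun h ↦ LinearEquiv.ext fun w ↦ ?_⟩
  · simpa [h] using (hpow n v).symm
  · rw [hpow, h, one_smul]; rfl

theorem sylowScalarMaps_eq [Nontrivial V] (p' : ℕ) :
    sylowScalarMaps k K V p' = {e | e ∈ scalarMaps k K V ∧ ∃ j : ℕ, orderOf e = p' ^ j} := by
  ext e
  constructor
  · rintro ⟨r, hr, hord, he⟩
    exact ⟨⟨r, hr, he⟩, orderOf_eq_of_forall_apply_eq_smul he ▸ hord⟩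
  · rintro ⟨⟨r, hr, he⟩, hord⟩
    exact ⟨r, hr, orderOf_eq_of_forall_apply_eq_smul he ▸ hord, he⟩

theorem normalizer_scalarMaps_le_normalizer_sylowScalarMaps [Nontrivial V] (p' : ℕ) :
    Subgroup.normalizer (scalarMaps k K V) ≤ Subgroup.normalizer (sylowScalarMaps k K V p') := by
  rw [sylowScalarMaps_eq]
  exact Subgroup.normalizer_le_normalizer_setOf_orderOf _ fun n ↦ ∃ j, n = p' ^ j

theorem conj_apply_eq_smul_of_semilinear {e n : V ≃ₗ[k] V} {σ : K → K}
    (hσ : ∀ (a : K) v, e (a • v) = σ a • e v) {r : K} (hn : ∀ v, n v = r • v) (v : V) :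
    (e * n * e⁻¹) v = σ r • v := by
  simp [LinearEquiv.mul_apply, hn, hσ]

theorem mem_normalizer_scalarMaps_of_semilinear {e : V ≃ₗ[k] V} (σ : K ≃+* K)
    (hσ : ∀ (a : K) v, e (a • v) = σ a • e v) :
    e ∈ Subgroup.normalizer (scalarMaps k K V) := by
  have hσ' (b : K) (v : V) : e⁻¹ (b • v) = σ.symm b • e⁻¹ v :=
    e.injective <| by simp [hσ]
  intro n
  refine ⟨fun ⟨r, hr, hn⟩ ↦ ⟨σ r, by simpa using hr, conj_apply_eq_smul_of_semilinear hσ hn⟩,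
    fun ⟨t, ht, hn⟩ ↦ ⟨σ.symm t, by simpa using ht, fun v ↦ ?_⟩⟩
  simpa [mul_assoc] using conj_apply_eq_smul_of_semilinear hσ' hn v

theorem mem_normalizer_scalarMaps_of_pow_semilinear (p j : ℕ) [ExpChar K p] [PerfectRing K p]
    {e : V ≃ₗ[k] V} (he : ∀ (a : K) v, e (a • v) = a ^ p ^ j • e v) :
    e ∈ Subgroup.normalizer (scalarMaps k K V) :=
  mem_normalizer_scalarMaps_of_semilinear (iterateFrobeniusEquiv K p j) fun a v ↦ by
    rw [iterateFrobeniusEquiv_apply, iterateFrobenius_def, he]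

variable [Algebra k K] [IsScalarTower k K V]

variable (K) in
def semilinearScalars (e : V ≃ₗ[k] V) : Subalgebra k K where
  carrier := {a | ∃ b : K, ∀ v, e (a • v) = b • e v}
  add_mem' := fun ⟨b, hb⟩ ⟨b', hb'⟩ ↦
    ⟨b + b', fun v ↦ by rw [add_smul, map_add, hb, hb', add_smul]⟩
  mul_mem' := fun ⟨b, hb⟩ ⟨b', hb'⟩ ↦ ⟨b * b', fun v ↦ by rw [mul_smul, hb, hb', mul_smul]⟩
  algebraMap_mem' c :=
    ⟨algebraMap k K c, fun v ↦ by rw [algebraMap_smul K c v, map_smul, algebraMap_smul]⟩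

theorem mem_semilinearScalars_of_conj {e n : V ≃ₗ[k] V} {r t : K} (hn : ∀ v, n v = r • v)
    (ht : ∀ v, (e * n * e⁻¹) v = t • v) : r ∈ semilinearScalars K e :=
  ⟨t, fun v ↦ by simpa [LinearEquiv.mul_apply, hn] using ht (e v)⟩

theorem exists_algHom_semilinear_of_semilinearScalars_eq_top [Nontrivial V] {e : V ≃ₗ[k] V}
    (h : semilinearScalars K e = ⊤) :
    ∃ σ : K →ₐ[k] K, ∀ (a : K) v, e (a • v) = σ a • e v := by
  have hmem (a : K) : ∃ b : K, ∀ v, e (a • v) = b • e v := by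
    change a ∈ semilinearScalars K e
    rw [h]
    trivial
  choose σ hσ using hmem
  obtain ⟨v₀, hv₀⟩ := exists_ne (0 : V)
  have huniq {a b : K} (hb : ∀ v, e (a • v) = b • e v) : σ a = b :=
    smul_left_injective K (e.map_ne_zero_iff.mpr hv₀) <| by simp only [← hσ, hb]
  refine ⟨
    { toFun := σ
      map_one' := huniq fun v ↦ by rw [one_smul, one_smul]
      map_mul' := fun a b ↦ huniq fun v ↦ by rw [mul_smul, hσ, hσ, mul_smul]
      map_zero' := huniq fun v ↦ by rw [zero_smul, map_zero, zero_smul]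
      map_add' := fun a b ↦ huniq fun v ↦ by rw [add_smul, map_add, hσ, hσ, add_smul]
      commutes' := fun c ↦ huniq fun v ↦ by
        rw [algebraMap_smul K c v, map_smul, algebraMap_smul] }, hσ⟩

end Semilinear

theorem exists_pow_semilinear_of_mem_normalizer_sylowScalarMaps {p p' : ℕ} [Fact p.Prime]
    {K V : Type*} [Field K] [Finite K] [Algebra (ZMod p) K] [AddCommGroup V] [Module K V]
    [Module (ZMod p) V] [IsScalarTower (ZMod p) K V] [Nontrivial V]
    (hp' : IsPrimitiveDivisor p (finrank (ZMod p) K) p') {e : V ≃ₗ[ZMod p] V}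
    (he : e ∈ Subgroup.normalizer (sylowScalarMaps (ZMod p) K V p')) :
    ∃ j < finrank (ZMod p) K, ∀ (a : K) v, e (a • v) = a ^ p ^ j • e v := by
  have : Fact p'.Prime := ⟨hp'.1⟩
  obtain ⟨u, hu⟩ : ∃ u : Kˣ, orderOf u = p' := by
    refine exists_prime_orderOf_dvd_card' p' ?_
    rw [Nat.card_units, Module.natCard_eq_pow_finrank (K := ZMod p), Nat.card_zmod]
    exact hp'.2.1
  rw [← orderOf_units] at hu
  obtain ⟨t, -, -, ht⟩ := (he ((LinearEquiv.smulOfUnit u).restrictScalars (ZMod p))).mp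
    ⟨u, u.ne_zero, ⟨1, by rw [hu, pow_one]⟩, fun v ↦ rfl⟩
  have hA : semilinearScalars K e = ⊤ := by
    refine Subalgebra.eq_top_of_mem_of_pow_card_pow_ne _
      (mem_semilinearScalars_of_conj (fun v ↦ rfl) ht) ?_
    rw [ZMod.card]
    exact fun j hj hjm ↦ pow_pow_ne_self_of_orderOf_eq hp' hu hj hjm
  obtain ⟨σ, hσ⟩ := exists_algHom_semilinear_of_semilinearScalars_eq_top hA
  obtain ⟨j, hj, hσj⟩ := FiniteField.exists_algHom_apply_eq_pow σ
  refine ⟨j, hj, fun a v ↦ ?_⟩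
  rw [hσ, hσj, ZMod.card]

theorem pow_semilinear_iff_exists_coeffs {k K : Type*} [Semiring k] [Field K] [Module k K]
    (e : (K × K) ≃ₗ[k] K × K) (n : ℕ) :
    (∀ (a : K) w, e (a • w) = a ^ n • e w) ↔ ∃ c₁ c₂ c₃ c₄ : K, ∀ w : K × K,
      e w = (c₁ * w.1 ^ n + c₂ * w.2 ^ n, c₃ * w.1 ^ n + c₄ * w.2 ^ n) := by
  constructor
  · intro h
    refine ⟨(e (1, 0)).1, (e (0, 1)).1, (e (1, 0)).2, (e (0, 1)).2, fun w ↦ ?_⟩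
    have hw : w = w.1 • ((1, 0) : K × K) + w.2 • ((0, 1) : K × K) := by ext <;> simp
    rw [hw, map_add, h, h]
    ext <;> simp [mul_comm]
  · rintro ⟨c₁, c₂, c₃, c₄, hc⟩ a w
    rw [hc, hc]
    ext <;> simp [mul_pow] <;> ring

/-- Lemma 4(a): the normalizers of `S_R` and `S` in `GL_{F_p}(F × F)` coincide and
consist exactly of the bijective maps `(x,y) ↦ (c₁ τ(x) + c₂ τ(y), c₃ τ(x) + c₄ τ(y))`
with `τ : x ↦ x^{p^j}` a field automorphism. -/
theorem normalizer_S_R (p m p' : ℕ) [Fact p.Prime] (hm : 0 < m)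
    (hp' : IsPrimitiveDivisor p m p') :
    let S : Set ((GF p m × GF p m) ≃ₗ[ZMod p] GF p m × GF p m) :=
      {e | ∃ r : GF p m, r ≠ 0 ∧ ∀ w : GF p m × GF p m, e w = (r * w.1, r * w.2)}
    let S_R : Set ((GF p m × GF p m) ≃ₗ[ZMod p] GF p m × GF p m) :=
      {e | ∃ r : GF p m, r ≠ 0 ∧ (∃ j : ℕ, orderOf r = p' ^ j) ∧
        ∀ w : GF p m × GF p m, e w = (r * w.1, r * w.2)}
    Subgroup.setNormalizer S_R = Subgroup.setNormalizer S ∧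
      (Subgroup.setNormalizer S : Set ((GF p m × GF p m) ≃ₗ[ZMod p] GF p m × GF p m)) =
        {e | ∃ (c₁ c₂ c₃ c₄ : GF p m) (j : ℕ), j ≤ m - 1 ∧
          ∀ w : GF p m × GF p m,
            e w = (c₁ * w.1 ^ p ^ j + c₂ * w.2 ^ p ^ j,
                   c₃ * w.1 ^ p ^ j + c₄ * w.2 ^ p ^ j)} := by
  intro S S_R
  rw [show S = scalarMaps (ZMod p) (GF p m) _ from rfl,
    show S_R = sylowScalarMaps (ZMod p) (GF p m) _ p' from rfl]
  have hfin : finrank (ZMod p) (GF p m) = m := GaloisField.finrank p hm.ne'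
  have hsemilinear (e : (GF p m × GF p m) ≃ₗ[ZMod p] GF p m × GF p m)
      (he : e ∈ Subgroup.normalizer (sylowScalarMaps (ZMod p) (GF p m) _ p')) :
      ∃ j ≤ m - 1, ∀ (a : GF p m) w, e (a • w) = a ^ p ^ j • e w := by
    obtain ⟨j, hj, h⟩ :=
      exists_pow_semilinear_of_mem_normalizer_sylowScalarMaps (by rwa [hfin]) he
    exact ⟨j, by omega, h⟩
  have hle := normalizer_scalarMaps_le_normalizer_sylowScalarMaps (k := ZMod p) (K := GF p m)
    (V := GF p m × GF p m) p'
  refine ⟨le_antisymm (fun e he ↦ ?_) hle, Set.ext fun e ↦ ⟨fun he ↦ ?_, ?_⟩⟩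
  · obtain ⟨j, -, h⟩ := hsemilinear e he
    exact mem_normalizer_scalarMaps_of_pow_semilinear p j h
  · obtain ⟨j, hj, h⟩ := hsemilinear e (hle he)
    obtain ⟨c₁, c₂, c₃, c₄, hc⟩ := (pow_semilinear_iff_exists_coeffs e _).mp h
    exact ⟨c₁, c₂, c₃, c₄, j, hj, hc⟩
  · rintro ⟨c₁, c₂, c₃, c₄, j, -, hc⟩
    exact mem_normalizer_scalarMaps_of_pow_semilinear p j
      ((pow_semilinear_iff_exists_coeffs e _).mpr ⟨c₁, c₂, c₃, c₄, hc⟩)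
end
end

section
/- Let p be a prime, m a positive integer, and p' a p-primitive divisor of p^m − 1. Let G = GL_{F_p}(F × F) be the group of F_p-linear bijections of F × F, and let S = {(x,y) ↦ (r·x, r·y) : r ∈ F^*} and S_R = {(x,y) ↦ (r·x, r·y) : r ∈ R} be subgroups of G. Then the centralizer of S_R in G equals the centralizer of S in G, and both equal the set of bijective maps of the form (x,y) ↦ (c₁·x + c₂·y, c₃·x + c₄·y) with c₁, c₂, c₃, c₄ ∈ F, i.e., the set of bijective F-linear maps of F × F. -/
/-! An element `r ∈ F^*` of order `p'` generates `F` over `F_p`: the subfield `F_p(r)` has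
`p^k` elements with `p' ∣ p^k - 1`, and primitivity of `p'` forces `k = m`. An `F_p`-linear map
commuting with multiplication by `r` therefore commutes with multiplication by every element of
`F_p[r] = F`, so it is `F`-linear, i.e. a `2 × 2` matrix over `F`. Such maps commute with all of
`S`, and `S_R ⊆ S` closes the chain of inclusions. -/

open scoped Classical
noncomputable section

open IntermediateField Module

theorem FiniteField.orderOf_dvd_pow_finrank_sub_one {p : ℕ} [Fact p.Prime] {F : Type*} [Field F]
    [Finite F] [Algebra (ZMod p) F] (E : IntermediateField (ZMod p) F) {x : F} (hxE : x ∈ E)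
    (hx : x ≠ 0) : orderOf x ∣ p ^ finrank (ZMod p) E - 1 := by
  have : Fintype E := Fintype.ofFinite E
  let y : E := ⟨x, hxE⟩
  have hy : y ≠ 0 := Subtype.coe_ne_coe.mp hx
  have hcard : Fintype.card E = p ^ finrank (ZMod p) E := by
    rw [card_eq_pow_finrank (K := ZMod p), ZMod.card]
  rw [show orderOf x = orderOf y from orderOf_injective E.val.toMonoidHom Subtype.val_injective y,
    ← hcard]
  exact orderOf_dvd_of_pow_eq_one (FiniteField.pow_card_sub_one_eq_one y hy)

theorem FiniteField.adjoin_simple_eq_top_of_not_orderOf_dvd {p : ℕ} [Fact p.Prime] {F : Type*}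
    [Field F] [Finite F] [Algebra (ZMod p) F] {x : F} (hx : x ≠ 0)
    (h : ∀ j, 1 ≤ j → j < finrank (ZMod p) F → ¬ orderOf x ∣ p ^ j - 1) :
    (ZMod p)⟮x⟯ = ⊤ := by
  have hdvd := orderOf_dvd_pow_finrank_sub_one _ (mem_adjoin_simple_self (ZMod p) x) hx
  have hle : finrank (ZMod p) (ZMod p)⟮x⟯ ≤ finrank (ZMod p) F :=
    finrank_bot_le_finrank_of_isScalarTower (ZMod p) _ F
  refine eq_of_le_of_finrank_eq le_top ?_
  rw [finrank_top']
  by_contra hne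
  exact h _ finrank_pos (lt_of_le_of_ne hle hne) hdvd

theorem FiniteField.exists_orderOf_eq_adjoin_eq_top {p p' : ℕ} [Fact p.Prime] {F : Type*}
    [Field F] [Finite F] [Algebra (ZMod p) F]
    (hp' : IsPrimitiveDivisor p (finrank (ZMod p) F) p') :
    ∃ r : Fˣ, orderOf r = p' ∧ Algebra.adjoin (ZMod p) {(r : F)} = ⊤ := by
  obtain ⟨hp'_prime, hp'_dvd, hp'_prim⟩ := hp'
  have : Fact p'.Prime := ⟨hp'_prime⟩
  have : Fintype F := Fintype.ofFinite F
  obtain ⟨r, hr⟩ := exists_prime_orderOf_dvd_card' (G := Fˣ) p' (by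
    rwa [Nat.card_units, Nat.card_eq_fintype_card, card_eq_pow_finrank (K := ZMod p), ZMod.card])
  refine ⟨r, hr, ?_⟩
  rw [← adjoin_simple_toSubalgebra_of_isAlgebraic (IsAlgebraic.of_finite _ _),
    adjoin_simple_eq_top_of_not_orderOf_dvd r.ne_zero (by rwa [orderOf_units, hr]),
    top_toSubalgebra]

section SmulComm

variable {K F V : Type*} [CommSemiring K] [CommSemiring F] [Algebra K F]
  [AddCommMonoid V] [Module K V] [Module F V] [IsScalarTower K F V]

variable (F) in
def LinearMap.smulCommSubalgebra (f : V →ₗ[K] V) : Subalgebra K F where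
  carrier := {c | ∀ v, f (c • v) = c • f v}
  mul_mem' {c d} hc hd v := by rw [mul_smul, hc (d • v), hd v, mul_smul]
  add_mem' {c d} hc hd v := by rw [add_smul, map_add, hc v, hd v, add_smul]
  algebraMap_mem' k v := by rw [algebraMap_smul, algebraMap_smul, map_smul]

theorem LinearMap.map_smul_of_adjoin_eq_top (f : V →ₗ[K] V) {x : F}
    (hx : Algebra.adjoin K {x} = ⊤) (hfx : ∀ v, f (x • v) = x • f v) (c : F) (v : V) :
    f (c • v) = c • f v := by
  have : ⊤ ≤ f.smulCommSubalgebra F := hx ▸ Algebra.adjoin_le (Set.singleton_subset_iff.2 hfx)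
  exact this Algebra.mem_top v

end SmulComm

theorem AddMonoidHom.exists_coeffs_of_map_smul {F : Type*} [CommSemiring F]
    (f : F × F →+ F × F) (hf : ∀ (c : F) w, f (c • w) = c • f w) :
    ∃ c₁ c₂ c₃ c₄ : F, ∀ w : F × F, f w = (c₁ * w.1 + c₂ * w.2, c₃ * w.1 + c₄ * w.2) := by
  refine ⟨(f (1, 0)).1, (f (0, 1)).1, (f (1, 0)).2, (f (0, 1)).2, fun w => ?_⟩
  have hw : w = w.1 • ((1, 0) : F × F) + w.2 • ((0, 1) : F × F) := by ext <;> simp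
  conv_lhs => rw [hw, map_add, hf, hf]
  ext <;> simp [mul_comm]

theorem commute_homothety_of_eq_coeffs {F : Type*} [CommSemiring F] {f g : F × F → F × F}
    {r c₁ c₂ c₃ c₄ : F} (hf : ∀ w, f w = (c₁ * w.1 + c₂ * w.2, c₃ * w.1 + c₄ * w.2))
    (hg : ∀ w, g w = (r * w.1, r * w.2)) : Function.Commute g f := fun w => by
  rw [hf, hg, hg, hf]
  ext <;> dsimp only <;> ring

/-- Lemma 4(b): the centralizers of `S_R` and `S` in `GL_{F_p}(F × F)` coincide and
consist exactly of the bijective `F`-linear maps `(x,y) ↦ (c₁x + c₂y, c₃x + c₄y)`. -/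
theorem centralizer_S_R (p m p' : ℕ) [Fact p.Prime] (hm : 0 < m)
    (hp' : IsPrimitiveDivisor p m p') :
    let S : Set ((GF p m × GF p m) ≃ₗ[ZMod p] GF p m × GF p m) :=
      {e | ∃ r : GF p m, r ≠ 0 ∧ ∀ w : GF p m × GF p m, e w = (r * w.1, r * w.2)}
    let S_R : Set ((GF p m × GF p m) ≃ₗ[ZMod p] GF p m × GF p m) :=
      {e | ∃ r : GF p m, r ≠ 0 ∧ (∃ j : ℕ, orderOf r = p' ^ j) ∧
        ∀ w : GF p m × GF p m, e w = (r * w.1, r * w.2)}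
    Subgroup.centralizer S_R = Subgroup.centralizer S ∧
      (Subgroup.centralizer S : Set ((GF p m × GF p m) ≃ₗ[ZMod p] GF p m × GF p m)) =
        {e | ∃ c₁ c₂ c₃ c₄ : GF p m,
          ∀ w : GF p m × GF p m,
            e w = (c₁ * w.1 + c₂ * w.2, c₃ * w.1 + c₄ * w.2)} := by
  intro S S_R
  obtain ⟨r, hr, hgen⟩ := FiniteField.exists_orderOf_eq_adjoin_eq_top (F := GF p m)
    (by rwa [GaloisField.finrank p hm.ne'])
  have hr_mem : DistribMulAction.toLinearEquiv (ZMod p) (GF p m × GF p m) r ∈ S_R :=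
    ⟨r, r.ne_zero, ⟨1, by rw [pow_one, orderOf_units, hr]⟩, fun w => rfl⟩
  have h_le : Subgroup.centralizer S ≤ Subgroup.centralizer S_R :=
    Subgroup.centralizer_le fun e ⟨r, hr0, _, he⟩ => ⟨r, hr0, he⟩
  have h_lin : ∀ e ∈ Subgroup.centralizer S_R, ∃ c₁ c₂ c₃ c₄ : GF p m,
      ∀ w : GF p m × GF p m, e w = (c₁ * w.1 + c₂ * w.2, c₃ * w.1 + c₄ * w.2) := fun e he =>
    e.toLinearMap.toAddMonoidHom.exists_coeffs_of_map_smul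
      (e.toLinearMap.map_smul_of_adjoin_eq_top hgen fun w =>
        (LinearEquiv.congr_fun (Subgroup.mem_centralizer_iff.mp he _ hr_mem) w).symm)
  have h_comm : ∀ e : (GF p m × GF p m) ≃ₗ[ZMod p] GF p m × GF p m, (∃ c₁ c₂ c₃ c₄ : GF p m,
      ∀ w : GF p m × GF p m, e w = (c₁ * w.1 + c₂ * w.2, c₃ * w.1 + c₄ * w.2)) →
      e ∈ Subgroup.centralizer S := by
    rintro e ⟨c₁, c₂, c₃, c₄, he⟩ g ⟨s, -, hg⟩
    exact LinearEquiv.ext (commute_homothety_of_eq_coeffs he hg)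
  exact ⟨le_antisymm (fun e he => h_comm e (h_lin e he)) h_le,
    Set.Subset.antisymm (fun e he => h_lin e (h_le he)) h_comm⟩
end
end

section
/- Let p be a prime and k, m positive integers, and set d = gcd(k,m) and l = m/d. Then gcd(p^k + 1, p^m − 1) = 1 if l is odd and p = 2; gcd(p^k + 1, p^m − 1) = 2 if l is odd and p > 2; and gcd(p^k + 1, p^m − 1) = p^d + 1 if l is even. -/
private lemma aux_mod (p k m : ℕ) (hp : 2 ≤ p) (hk : 0 < k) :
    (p ^ m - 1) % (p ^ k - 1) = p ^ (m % k) - 1 := by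
  obtain ⟨c, hc⟩ : p ^ k - 1 ∣ (p ^ k) ^ (m / k) - 1 := by
    simpa using Nat.sub_dvd_pow_sub_pow (p ^ k) 1 (m / k)
  have h1 : (1:ℕ) ≤ p ^ k := Nat.one_le_pow _ _ (by omega)
  have h2 : (1:ℕ) ≤ p ^ (m % k) := Nat.one_le_pow _ _ (by omega)
  have h3 : (1:ℕ) ≤ (p ^ k) ^ (m / k) := Nat.one_le_pow _ _ (by positivity)
  have hm' : p ^ m = (p ^ k) ^ (m / k) * p ^ (m % k) := by
    rw [← pow_mul, ← pow_add, Nat.div_add_mod]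
  have h4 : p ^ m = (p ^ k - 1) * (c * p ^ (m % k)) + p ^ (m % k) := by
    rw [hm', show (p ^ k) ^ (m / k) = (p ^ k - 1) * c + 1 by omega]; ring
  have key : p ^ m - 1 = (p ^ k - 1) * (c * p ^ (m % k)) + (p ^ (m % k) - 1) := by
    omega
  rw [key, Nat.mul_add_mod, Nat.mod_eq_of_lt]
  have : p ^ (m % k) < p ^ k := Nat.pow_lt_pow_right (by omega) (Nat.mod_lt _ hk)
  omega

private lemma aux_gcd (p : ℕ) (hp : 2 ≤ p) (k m : ℕ) :
    Nat.gcd (p ^ k - 1) (p ^ m - 1) = p ^ (Nat.gcd k m) - 1 := by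
  induction k, m using Nat.gcd.induction with
  | H0 n => simp
  | H1 k n hk ih =>
    rw [Nat.gcd_rec (p ^ k - 1) (p ^ n - 1), aux_mod p k n hp hk, ih,
      Nat.gcd_rec k n]

private lemma aux_sq (p k : ℕ) (hp : 2 ≤ p) :
    p ^ (2 * k) - 1 = (p ^ k + 1) * (p ^ k - 1) := by
  have h1 : (1:ℕ) ≤ p ^ k := Nat.one_le_pow _ _ (by omega)
  obtain ⟨b, hb⟩ : ∃ b, p ^ k = b + 1 := ⟨p ^ k - 1, by omega⟩
  rw [two_mul, pow_add, hb, Nat.add_sub_cancel]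
  have e1 : (b + 1) * (b + 1) = b * b + 2 * b + 1 := by ring
  have e2 : (b + 1 + 1) * b = b * b + 2 * b := by ring
  omega

/-- Lemma 7: the value of `gcd(p^k + 1, p^m - 1)` in terms of `d = gcd(k,m)`
and `l = m/d`. -/
theorem gcd_pow_add_one (p k m : ℕ) (hp : p.Prime) (hk : 0 < k) (hm : 0 < m) :
    let d := Nat.gcd k m
    let l := m / d
    (Odd l → p = 2 → Nat.gcd (p ^ k + 1) (p ^ m - 1) = 1) ∧
    (Odd l → 2 < p → Nat.gcd (p ^ k + 1) (p ^ m - 1) = 2) ∧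
    (Even l → Nat.gcd (p ^ k + 1) (p ^ m - 1) = p ^ d + 1) := by
  intro d l
  have hp2 : 2 ≤ p := hp.two_le
  have hd : 0 < d := Nat.gcd_pos_of_pos_left m hk
  have hdk : d ∣ k := Nat.gcd_dvd_left k m
  have hdm : d ∣ m := Nat.gcd_dvd_right k m
  set k' := k / d with hk'def
  have hkk : k = d * k' := (Nat.mul_div_cancel' hdk).symm
  have hml : m = d * l := (Nat.mul_div_cancel' hdm).symm
  have hco : Nat.Coprime k' l := Nat.coprime_div_gcd_div_gcd hd
  set g := Nat.gcd (p ^ k + 1) (p ^ m - 1) with hgdef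
  have hg1 : g ∣ p ^ k + 1 := Nat.gcd_dvd_left _ _
  have hg2 : g ∣ p ^ m - 1 := Nat.gcd_dvd_right _ _
  have h1k : (1:ℕ) ≤ p ^ k := Nat.one_le_pow _ _ (by omega)
  have h1d : (1:ℕ) ≤ p ^ d := Nat.one_le_pow _ _ (by omega)
  -- g divides p^(gcd(2k,m)) - 1
  have hdvd1 : g ∣ p ^ (Nat.gcd (2 * k) m) - 1 := by
    rw [← aux_gcd p hp2]
    refine Nat.dvd_gcd (hg1.trans ?_) hg2
    rw [aux_sq p k hp2]
    exact dvd_mul_right _ _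
  -- p^d - 1 divides p^k - 1
  have hdk1 : p ^ d - 1 ∣ p ^ k - 1 := by
    rw [hkk, pow_mul]
    simpa using Nat.sub_dvd_pow_sub_pow (p ^ d) 1 k'
  have hk'pos : 0 < k' := by
    rcases Nat.eq_zero_or_pos k' with h | h
    · rw [h, mul_zero] at hkk; omega
    · exact h
  constructor
  · -- odd l, p = 2
    intro hl hpe
    have hgcd2 : Nat.gcd (2 * k) m = d := by
      have h2l : Nat.Coprime 2 l := Nat.coprime_two_left.mpr hl
      calc Nat.gcd (2 * k) m = Nat.gcd (d * (2 * k')) (d * l) := by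
            rw [show 2 * k = d * (2 * k') by rw [hkk]; ring, ← hml]
          _ = d * Nat.gcd (2 * k') l := Nat.gcd_mul_left d (2 * k') l
          _ = d * Nat.gcd k' l := by rw [h2l.gcd_mul_left_cancel k']
          _ = d := by rw [hco]; ring
    rw [hgcd2] at hdvd1
    have hgd : g ∣ 2 := by
      have := Nat.dvd_sub hg1 (hdvd1.trans hdk1)
      simpa [show p ^ k + 1 - (p ^ k - 1) = 2 by omega] using this
    subst hpe
    have hodd : ¬ (2 ∣ 2 ^ k + 1) := by
      have : 2 ∣ 2 ^ k := dvd_pow_self 2 hk.ne'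
      omega
    rcases (Nat.dvd_prime Nat.prime_two).mp hgd with h | h
    · exact h
    · exact absurd (h ▸ hg1) hodd
  constructor
  · -- odd l, p > 2
    intro hl hpgt
    have hgcd2 : Nat.gcd (2 * k) m = d := by
      have h2l : Nat.Coprime 2 l := Nat.coprime_two_left.mpr hl
      calc Nat.gcd (2 * k) m = Nat.gcd (d * (2 * k')) (d * l) := by
            rw [show 2 * k = d * (2 * k') by rw [hkk]; ring, ← hml]
          _ = d * Nat.gcd (2 * k') l := Nat.gcd_mul_left d (2 * k') l
          _ = d * Nat.gcd k' l := by rw [h2l.gcd_mul_left_cancel k']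
          _ = d := by rw [hco]; ring
    rw [hgcd2] at hdvd1
    have hgd : g ∣ 2 := by
      have := Nat.dvd_sub hg1 (hdvd1.trans hdk1)
      simpa [show p ^ k + 1 - (p ^ k - 1) = 2 by omega] using this
    have hpodd : Odd p := hp.odd_of_ne_two (by omega)
    have hpk : Odd (p ^ k) := hpodd.pow
    have hpm : Odd (p ^ m) := hpodd.pow
    have h2g : 2 ∣ g := by
      refine Nat.dvd_gcd ?_ ?_
      · obtain ⟨t, ht⟩ := hpk; omega
      · obtain ⟨t, ht⟩ := hpm; omega
    exact Nat.dvd_antisymm hgd h2g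
  · -- even l
    intro hl
    obtain ⟨l₂, hl₂⟩ : ∃ l₂, l = 2 * l₂ := by
      obtain ⟨t, ht⟩ := hl; exact ⟨t, by omega⟩
    have hk'odd : Odd k' := by
      rw [Nat.odd_iff, ← Nat.not_even_iff]
      intro h
      obtain ⟨t, ht⟩ := h
      have : 2 ∣ Nat.gcd k' l := Nat.dvd_gcd (by omega) (by omega)
      rw [hco] at this; omega
    -- gcd(2k, m) = 2d
    have hgcd2 : Nat.gcd (2 * k) m = 2 * d := by
      have hco2 : Nat.gcd k' l₂ = 1 := by
        have : Nat.gcd k' l₂ ∣ Nat.gcd k' l :=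
          Nat.dvd_gcd (Nat.gcd_dvd_left _ _) ((Nat.gcd_dvd_right _ _).trans ⟨2, by omega⟩)
        rw [hco] at this
        exact Nat.dvd_one.mp this
      calc Nat.gcd (2 * k) m = Nat.gcd (d * (2 * k')) (d * (2 * l₂)) := by
            rw [show 2 * k = d * (2 * k') by rw [hkk]; ring, ← hl₂, ← hml]
          _ = d * Nat.gcd (2 * k') (2 * l₂) := Nat.gcd_mul_left d _ _
          _ = d * (2 * Nat.gcd k' l₂) := by rw [Nat.gcd_mul_left 2 k' l₂]
          _ = 2 * d := by rw [hco2]; ring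
    rw [hgcd2] at hdvd1
    -- p^d + 1 divides g
    have hE1 : p ^ d + 1 ∣ p ^ k + 1 := by
      rw [hkk, pow_mul]
      simpa using hk'odd.nat_add_dvd_pow_add_pow (p ^ d) 1
    have hE2 : p ^ d + 1 ∣ p ^ m - 1 := by
      have h2dm : p ^ (2 * d) - 1 ∣ p ^ m - 1 := by
        have hme : p ^ m = (p ^ (2 * d)) ^ l₂ := by
          rw [← pow_mul, hml, hl₂]; congr 1; ring
        rw [hme]
        simpa using Nat.sub_dvd_pow_sub_pow (p ^ (2 * d)) 1 l₂
      exact (dvd_trans (by rw [aux_sq p d hp2]; exact dvd_mul_right _ _) h2dm)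
    have hE : p ^ d + 1 ∣ g := Nat.dvd_gcd hE1 hE2
    obtain ⟨s, hs⟩ := hE
    have hsdvd : s ∣ p ^ d - 1 := by
      have h3 : (p ^ d + 1) * s ∣ (p ^ d + 1) * (p ^ d - 1) := by
        rw [← hs, ← aux_sq p d hp2]; exact hdvd1
      exact (mul_dvd_mul_iff_left (show (p ^ d + 1) ≠ 0 by omega)).mp h3
    have hsg : s ∣ g := Dvd.intro_left _ hs.symm
    have hs2 : s ∣ 2 := by
      have := Nat.dvd_sub (hsg.trans hg1) (hsdvd.trans hdk1)
      simpa [show p ^ k + 1 - (p ^ k - 1) = 2 by omega] using this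
    have hs12 : s = 1 ∨ s = 2 := (Nat.dvd_prime Nat.prime_two).mp hs2
    rcases hs12 with h | h
    · rw [hs, h, mul_one]
    · exfalso
      subst h
      -- 2 * (p^d + 1) ∣ p^k + 1, derive contradiction
      have hdvdk : 2 * (p ^ d + 1) ∣ p ^ k + 1 := by
        have : (p ^ d + 1) * 2 ∣ p ^ k + 1 := hs ▸ hg1
        rwa [mul_comm] at this
      rcases Nat.eq_or_lt_of_le hp2 with hpe | hpgt
      · -- p = 2 : p^k + 1 is odd
        have hpk2 : 2 ∣ p ^ k := by rw [← hpe]; exact dvd_pow_self 2 hk.ne'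
        have h2 : 2 ∣ p ^ k + 1 := dvd_trans ⟨p ^ d + 1, by ring⟩ hdvdk
        omega
      · -- p odd
        have hpodd : Odd p := hp.odd_of_ne_two (by omega)
        set a := p ^ d with hadef
        have haodd : Odd a := hpodd.pow
        have ha2 : 2 ≤ a := by
          calc 2 ≤ p := hp2
            _ = p ^ 1 := (pow_one p).symm
            _ ≤ p ^ d := Nat.pow_le_pow_right (by omega) hd
        obtain ⟨j, hj⟩ : ∃ j, k' - 1 = 2 * j := ⟨(k' - 1) / 2, by
          obtain ⟨t, ht⟩ := hk'odd; omega⟩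
        have h1km : (1:ℕ) ≤ a ^ (k' - 1) := Nat.one_le_pow _ _ (by omega)
        have hsq : 2 * (a + 1) ∣ a ^ 2 - 1 := by
          obtain ⟨t, ht⟩ := haodd
          refine ⟨t, ?_⟩
          rw [ht]
          have e1 : (2 * t + 1) ^ 2 = 4 * (t * t) + 4 * t + 1 := by ring
          have e2 : 2 * (2 * t + 1 + 1) * t = 4 * (t * t) + 4 * t := by ring
          omega
        have hstep : 2 * (a + 1) ∣ a ^ (k' - 1) - 1 := by
          refine hsq.trans ?_
          rw [show k' - 1 = 2 * j from hj, pow_mul]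
          simpa using Nat.sub_dvd_pow_sub_pow (a ^ 2) 1 j
        have hprod : a * a ^ (k' - 1) = a ^ k' := by
          rw [← pow_succ']
          congr 1
          omega
        have hdvdmid : 2 * (a + 1) ∣ a ^ k' - a := by
          have : 2 * (a + 1) ∣ a * (a ^ (k' - 1) - 1) := hstep.mul_left a
          rwa [Nat.mul_sub, mul_one, hprod] at this
        have hka : p ^ k + 1 = a ^ k' + 1 := by rw [hkk, pow_mul]
        rw [hka] at hdvdk
        have haa : a ≤ a ^ k' := by
          calc a = a ^ 1 := (pow_one a).symm
            _ ≤ a ^ k' := Nat.pow_le_pow_right (by omega) hk'pos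
        have hfinal : 2 * (a + 1) ∣ a + 1 := by
          have := Nat.dvd_sub hdvdk hdvdmid
          simpa [show a ^ k' + 1 - (a ^ k' - a) = a + 1 by omega] using this
        have := Nat.le_of_dvd (by omega) hfinal
        omega
end
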